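/- arXiv:2603.28247 — 2 statements merged into one kernel-verified Lean document; each statement's English description precedes it below -/
import Mathlib

section
/- Let G be a simple connected graph with closed neighborhood ideal N_G, let D be a minimal dominating set of G, and let f be a homogeneous polynomial of degree d such that the colon ideal (N_G : f) equals ⟨D⟩. Then there exists a set of vertices U ⊆ P_N(D) that dominates D such that (N_G : t_{N[U]∖D}) = ⟨D⟩ and |N[U]∖D| ≤ d. -/
open Finset MvPolynomial

noncomputable section
open scoped Classical

variable {V : Type*}

/-- The closed neighborhood of a vertex, as a finite set. -/
def closedNbhd [Fintype V] (G : SimpleGraph V) (v : V) : Finset V :=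
  Finset.univ.filter fun u => u = v ∨ G.Adj v u

/-- The closed neighborhood of a set of vertices. -/
def closedNbhdSet [Fintype V] (G : SimpleGraph V) (A : Finset V) : Finset V :=
  A.biUnion (closedNbhd G)

/-- A dominating set of a graph. -/
def IsDominatingSet [Fintype V] (G : SimpleGraph V) (D : Finset V) : Prop :=
  ∀ v : V, ∃ u ∈ D, v ∈ closedNbhd G u

/-- A minimal dominating set: dominating, and no proper subset dominates. -/
def IsMinimalDominatingSet [Fintype V] (G : SimpleGraph V) (D : Finset V) : Prop :=
  IsDominatingSet G D ∧ ∀ D' ⊂ D, ¬ IsDominatingSet G D'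

/-- The set of external and self-private neighbors of D: the vertices whose
closed neighborhood meets D in exactly one vertex. -/
def privateNbrs [Fintype V] (G : SimpleGraph V) (D : Finset V) : Finset V :=
  Finset.univ.filter fun v => (closedNbhd G v ∩ D).card = 1

/-- The closed neighborhood ideal of a graph, in the polynomial ring over K with
one variable for each vertex. -/
def cnIdeal (K : Type*) [Field K] [Fintype V] (G : SimpleGraph V) :
    Ideal (MvPolynomial V K) :=
  Ideal.span (Set.range fun v => ∏ u ∈ closedNbhd G v, X u)

/-- The ideal generated by the variables indexed by a set of vertices D. -/
def vertexIdeal (K : Type*) [Field K] (D : Finset V) : Ideal (MvPolynomial V K) :=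
  Ideal.span ((fun v => (X v : MvPolynomial V K)) '' ↑D)

/-- The v-number of a graded ideal: the least degree d of a homogeneous polynomial f
such that the colon ideal (I : f) is an associated prime of S/I. -/
def vNumber {K : Type*} [Field K] (I : Ideal (MvPolynomial V K)) : ℕ :=
  sInf {d : ℕ | ∃ f : MvPolynomial V K, f.IsHomogeneous d ∧
    Submodule.colon I (Ideal.span {f}) ∈
      associatedPrimes (MvPolynomial V K) (MvPolynomial V K ⧸ I)}

end

set_option linter.unusedSectionVars false

section Aux
variable {V : Type*} [Fintype V] [DecidableEq V] {K : Type*} [Field K]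

/-- The squarefree exponent vector of a finset of vertices. -/
noncomputable def eF (A : Finset V) : V →₀ ℕ := ∑ v ∈ A, Finsupp.single v 1

lemma eF_apply (A : Finset V) (i : V) : eF A i = if i ∈ A then 1 else 0 := by
  classical
  simp only [eF, Finsupp.finset_sum_apply, Finsupp.single_apply]
  exact Finset.sum_ite_eq' A i (fun _ => 1)

lemma eF_le_iff {A : Finset V} {m : V →₀ ℕ} : eF A ≤ m ↔ ∀ i ∈ A, m i ≠ 0 := by
  rw [Finsupp.le_def]
  constructor
  · intro h i hi
    have := h i
    rw [eF_apply, if_pos hi] at this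
    omega
  · intro h i
    rw [eF_apply]
    split_ifs with hi
    · exact Nat.one_le_iff_ne_zero.mpr (h i hi)
    · exact Nat.zero_le _

lemma eF_insert {v : V} {A : Finset V} (hv : v ∉ A) :
    eF (insert v A) = Finsupp.single v 1 + eF A := by
  rw [eF, Finset.sum_insert hv]; rfl

lemma prod_X_eq (A : Finset V) : (∏ v ∈ A, (X v : MvPolynomial V K)) = monomial (eF A) 1 := by
  classical
  induction A using Finset.induction with
  | empty => simp [eF]
  | insert _ _ hv ih =>
      rw [Finset.prod_insert hv, ih, eF_insert hv, X, monomial_mul, one_mul]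

lemma mem_cnIdeal_iff (G : SimpleGraph V) {p : MvPolynomial V K} :
    p ∈ cnIdeal K G ↔ ∀ m ∈ p.support, ∃ w : V, eF (closedNbhd G w) ≤ m := by
  classical
  have hfun : (fun v => ∏ u ∈ closedNbhd G v, (X u : MvPolynomial V K))
      = fun v => monomial (eF (closedNbhd G v)) (1 : K) :=
    funext fun v => prod_X_eq _
  have hrw : cnIdeal K G =
      Ideal.span ((fun s => monomial s (1 : K)) ''
        (Set.range fun v => eF (closedNbhd G v))) := by
    rw [cnIdeal, hfun, ← Set.range_comp]
    rfl
  rw [hrw, mem_ideal_span_monomial_image]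
  simp

lemma mem_vertexIdeal_iff {D : Finset V} {p : MvPolynomial V K} :
    p ∈ vertexIdeal K D ↔ ∀ m ∈ p.support, ∃ i ∈ D, (m : V →₀ ℕ) i ≠ 0 := by
  rw [vertexIdeal]
  exact mem_ideal_span_X_image

lemma monomial_mem_cnIdeal_iff (G : SimpleGraph V) {σ : V →₀ ℕ} :
    (monomial σ (1 : K)) ∈ cnIdeal K G ↔ ∃ w : V, eF (closedNbhd G w) ≤ σ := by
  rw [mem_cnIdeal_iff]
  simp [support_monomial]

lemma mem_closedNbhdSet {G : SimpleGraph V} {A : Finset V} {i : V} :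
    i ∈ closedNbhdSet G A ↔ ∃ u ∈ A, i ∈ closedNbhd G u := by
  rw [closedNbhdSet]
  exact @Finset.mem_biUnion V V A (closedNbhd G)
    (fun a b => Classical.propDecidable (a = b)) i

end Aux

set_option maxHeartbeats 1000000 in
/-- If D is a minimal dominating set and f is homogeneous of degree d with
(N_G : f) = ⟨D⟩, then there is U ⊆ P_N(D) dominating D with
(N_G : t_{N[U] \ D}) = ⟨D⟩ and |N[U] \ D| ≤ d. -/
theorem exists_private_dominating_of_colon {V : Type*} [Fintype V] [DecidableEq V]
    (K : Type*) [Field K] (G : SimpleGraph V) (hG : G.Connected) (D : Finset V)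
    (hD : IsMinimalDominatingSet G D) (d : ℕ) (f : MvPolynomial V K)
    (hf : f.IsHomogeneous d)
    (h : Submodule.colon (cnIdeal K G) (Ideal.span {f}) = vertexIdeal K D) :
    ∃ U : Finset V, U ⊆ privateNbrs G D ∧ D ⊆ closedNbhdSet G U ∧
      Submodule.colon (cnIdeal K G)
          (Ideal.span {∏ v ∈ closedNbhdSet G U \ D, (X v : MvPolynomial V K)}) =
        vertexIdeal K D ∧
      (closedNbhdSet G U \ D).card ≤ d := by
  have h1 : (1 : MvPolynomial V K) ∉ vertexIdeal K D := by
    intro hmem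
    obtain ⟨i, _, h0⟩ := mem_vertexIdeal_iff.mp hmem 0 (by simp)
    exact h0 rfl
  have hf0 : f ≠ 0 := by
    rintro rfl
    exact h1 (h ▸ Ideal.mem_colon_span_singleton.mpr (by simp))
  have hXmul : ∀ (u : V) (σ : V →₀ ℕ), (X u : MvPolynomial V K) * monomial σ 1
      = monomial (Finsupp.single u 1 + σ) 1 := by
    intro u σ
    rw [X, monomial_mul, one_mul]
  have hXP : ∀ u ∈ D, (X u : MvPolynomial V K) ∈ vertexIdeal K D := by
    intro u hu
    rw [vertexIdeal]
    exact Ideal.subset_span ⟨u, hu, rfl⟩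
  -- the vertex ideal is contained in each colon by a monomial of f
  have hPCa : ∀ a ∈ f.support, vertexIdeal K D ≤
      Submodule.colon (cnIdeal K G) (Ideal.span {(monomial a 1 : MvPolynomial V K)}) := by
    intro a ha
    rw [vertexIdeal, Ideal.span_le]
    rintro _ ⟨u, hu, rfl⟩
    rw [SetLike.mem_coe, Ideal.mem_colon_span_singleton, hXmul]
    have hXf : (X u : MvPolynomial V K) * f ∈ cnIdeal K G := by
      have hx := hXP u hu
      rw [← h] at hx
      exact Ideal.mem_colon_span_singleton.mp hx
    have hsup : Finsupp.single u 1 + a ∈ ((X u : MvPolynomial V K) * f).support := by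
      rw [mem_support_iff, coeff_X_mul]
      exact mem_support_iff.mp ha
    obtain ⟨w, hw⟩ := (mem_cnIdeal_iff G).mp hXf _ hsup
    exact (monomial_mem_cnIdeal_iff G).mpr ⟨w, hw⟩
  -- there exists a monomial of f whose colon is contained in the vertex ideal
  have hex : ∃ a ∈ f.support,
      Submodule.colon (cnIdeal K G) (Ideal.span {(monomial a 1 : MvPolynomial V K)}) ≤
        vertexIdeal K D := by
    by_contra hcon
    push_neg at hcon
    have step : ∀ a ∈ f.support, ∃ m : V →₀ ℕ,
        (∀ i ∈ D, m i = 0) ∧ (monomial (m + a) 1 : MvPolynomial V K) ∈ cnIdeal K G := by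
      intro a ha
      obtain ⟨g, hgC, hgP⟩ := SetLike.not_le_iff_exists.mp (hcon a ha)
      rw [mem_vertexIdeal_iff] at hgP
      push_neg at hgP
      obtain ⟨m, hm, hmD⟩ := hgP
      refine ⟨m, fun i hi => hmD i hi, ?_⟩
      have hgmul : g * monomial a 1 ∈ cnIdeal K G := Ideal.mem_colon_span_singleton.mp hgC
      have hsup : m + a ∈ (g * monomial a (1 : K)).support := by
        rw [mem_support_iff, coeff_mul_monomial, mul_one]
        exact mem_support_iff.mp hm
      obtain ⟨w, hw⟩ := (mem_cnIdeal_iff G).mp hgmul _ hsup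
      exact (monomial_mem_cnIdeal_iff G).mpr ⟨w, hw⟩
    choose m hmD hmN using step
    set mm : V →₀ ℕ := ∑ a ∈ f.support.attach, m a.1 a.2 with hmm
    have hmmD : ∀ i ∈ D, mm i = 0 := by
      intro i hi
      rw [hmm, Finsupp.finset_sum_apply]
      exact Finset.sum_eq_zero fun a _ => hmD a.1 a.2 i hi
    have hle : ∀ a : {x // x ∈ f.support}, m a.1 a.2 ≤ mm := fun a =>
      Finset.single_le_sum (f := fun a : {x // x ∈ f.support} => m a.1 a.2)
        (fun _ _ => zero_le) (Finset.mem_attach _ a)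
    have hmmCa : ∀ a : {x // x ∈ f.support},
        (monomial mm 1 : MvPolynomial V K) * monomial a.1 1 ∈ cnIdeal K G := by
      intro a
      have hsub : mm - m a.1 a.2 + (m a.1 a.2 + a.1) = mm + a.1 := by
        rw [← add_assoc, tsub_add_cancel_of_le (hle a)]
      have hcalc : (monomial mm (1 : K)) * monomial a.1 1
          = monomial (mm - m a.1 a.2) 1 * monomial (m a.1 a.2 + a.1) 1 := by
        rw [monomial_mul, monomial_mul, one_mul, hsub]
      rw [hcalc]
      exact Ideal.mul_mem_left _ _ (hmN a.1 a.2)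
    have hmmP : (monomial mm 1 : MvPolynomial V K) ∈ vertexIdeal K D := by
      rw [← h, Ideal.mem_colon_span_singleton]
      have hsum : (monomial mm (1 : K)) * f
          = ∑ a ∈ f.support, monomial mm 1 * monomial a (coeff a f) := by
        conv_lhs => rw [f.as_sum]
        rw [Finset.mul_sum]
      rw [hsum]
      refine Ideal.sum_mem _ fun a ha => ?_
      have hrw : (monomial mm (1 : K)) * monomial a (coeff a f)
          = C (coeff a f) * ((monomial mm 1) * monomial a 1) := by
        rw [monomial_mul, monomial_mul, one_mul, C_mul_monomial, one_mul, mul_one]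
      rw [hrw]
      exact Ideal.mul_mem_left _ _ (hmmCa ⟨a, ha⟩)
    obtain ⟨i, hiD, hine⟩ := mem_vertexIdeal_iff.mp hmmP mm (by simp [support_monomial])
    exact hine (hmmD i hiD)
  obtain ⟨a, haf, hCaP⟩ := hex
  have hCa : Submodule.colon (cnIdeal K G)
      (Ideal.span {(monomial a 1 : MvPolynomial V K)}) = vertexIdeal K D :=
    le_antisymm hCaP (hPCa a haf)
  have hdeg : ∑ i ∈ a.support, a i = d := by
    have hwt := hf (mem_support_iff.mp haf)
    have hdd : Finsupp.degree a = d := by rw [Finsupp.degree_eq_weight_one]; exact hwt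
    exact hdd
  have hNa : (monomial a 1 : MvPolynomial V K) ∉ cnIdeal K G := by
    intro hmem
    apply h1
    rw [← hCa]
    exact Ideal.mem_colon_span_singleton.mpr (by rw [one_mul]; exact hmem)
  have haD : ∀ i ∈ D, a i = 0 := by
    intro v hv
    by_contra hva
    have hXv := hXP v hv
    rw [← hCa, Ideal.mem_colon_span_singleton, hXmul] at hXv
    obtain ⟨w, hw⟩ := (monomial_mem_cnIdeal_iff G).mp hXv
    apply hNa
    refine (monomial_mem_cnIdeal_iff G).mpr ⟨w, ?_⟩
    rw [eF_le_iff] at hw ⊢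
    intro i hi
    have hne := hw i hi
    by_cases hiv : i = v
    · subst hiv; exact hva
    · rwa [Finsupp.add_apply, Finsupp.single_eq_of_ne' (Ne.symm hiv), zero_add] at hne
  have key : ∀ u : V, ∃ w : V, u ∈ D →
      eF (closedNbhd G w) ≤ Finsupp.single u 1 + a := by
    intro u
    by_cases hu : u ∈ D
    · have hXu := hXP u hu
      rw [← hCa, Ideal.mem_colon_span_singleton, hXmul] at hXu
      obtain ⟨w, hw⟩ := (monomial_mem_cnIdeal_iff G).mp hXu
      exact ⟨w, fun _ => hw⟩
    · exact ⟨u, fun hc => absurd hc hu⟩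
  choose w hw using key
  have p1 : ∀ u ∈ D, ∀ i ∈ closedNbhd G (w u), i = u ∨ a i ≠ 0 := by
    intro u hu i hi
    have hne := (eF_le_iff.mp (hw u hu)) i hi
    by_cases hiu : i = u
    · exact Or.inl hiu
    · right
      rwa [Finsupp.add_apply, Finsupp.single_eq_of_ne' (Ne.symm hiu), zero_add] at hne
  have p2 : ∀ u ∈ D, u ∈ closedNbhd G (w u) := by
    intro u hu
    by_contra hnu
    apply hNa
    refine (monomial_mem_cnIdeal_iff G).mpr ⟨w u, ?_⟩
    rw [eF_le_iff]
    intro i hi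
    rcases p1 u hu i hi with rfl | hne
    · exact absurd hi hnu
    · exact hne
  have hSa : ∀ i ∈ closedNbhdSet G (D.image w) \ D, a i ≠ 0 := by
    intro i hi
    rw [Finset.mem_sdiff, mem_closedNbhdSet] at hi
    obtain ⟨⟨x, hx, hix⟩, hiD⟩ := hi
    obtain ⟨u, hu, hxu⟩ := Finset.mem_image.mp hx
    subst hxu
    rcases p1 u hu i hix with rfl | hne
    · exact absurd hu hiD
    · exact hne
  refine ⟨D.image w, ?_, ?_, ?_, ?_⟩
  · -- U ⊆ privateNbrs G D
    intro x hx
    obtain ⟨u, hu, hxu⟩ := Finset.mem_image.mp hx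
    subst hxu
    rw [privateNbrs, Finset.mem_filter]
    refine ⟨Finset.mem_univ _, ?_⟩
    rw [Finset.card_eq_one]
    refine ⟨u, ?_⟩
    ext i
    simp only [Finset.mem_inter, Finset.mem_singleton]
    constructor
    · rintro ⟨hi1, hi2⟩
      rcases p1 u hu i hi1 with hiu | hne
      · exact hiu
      · exact absurd (haD i hi2) hne
    · rintro rfl
      exact ⟨p2 _ hu, hu⟩
  · -- D ⊆ N[U]
    intro u hu
    rw [mem_closedNbhdSet]
    exact ⟨w u, Finset.mem_image_of_mem w hu, p2 u hu⟩
  · -- colon equality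
    rw [prod_X_eq]
    have heS : eF (closedNbhdSet G (D.image w) \ D) ≤ a := eF_le_iff.mpr hSa
    apply le_antisymm
    · intro g hg
      have hg' : g * monomial (eF (closedNbhdSet G (D.image w) \ D)) 1 ∈ cnIdeal K G :=
        Ideal.mem_colon_span_singleton.mp hg
      rw [← hCa]
      rw [Ideal.mem_colon_span_singleton]
      have hfac : g * monomial a (1 : K)
          = g * monomial (eF (closedNbhdSet G (D.image w) \ D)) 1
            * monomial (a - eF (closedNbhdSet G (D.image w) \ D)) 1 := by
        rw [mul_assoc, monomial_mul, one_mul, add_tsub_cancel_of_le heS]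
      rw [hfac]
      exact Ideal.mul_mem_right _ _ hg'
    · rw [vertexIdeal, Ideal.span_le]
      rintro _ ⟨u, hu, rfl⟩
      rw [SetLike.mem_coe, Ideal.mem_colon_span_singleton, hXmul]
      refine (monomial_mem_cnIdeal_iff G).mpr ⟨w u, ?_⟩
      rw [eF_le_iff]
      intro i hi
      rw [Finsupp.add_apply]
      rcases p1 u hu i hi with rfl | hne
      · rw [Finsupp.single_eq_same]
        omega
      · have hiS : i ∈ closedNbhdSet G (D.image w) \ D := by
          rw [Finset.mem_sdiff]
          constructor
          · rw [mem_closedNbhdSet]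
            exact ⟨w u, Finset.mem_image_of_mem w hu, hi⟩
          · intro hiD
            exact hne (haD i hiD)
        rw [eF_apply, if_pos hiS]
        omega
  · -- cardinality
    calc (closedNbhdSet G (D.image w) \ D).card
        ≤ a.support.card :=
          Finset.card_le_card fun i hi => Finsupp.mem_support_iff.mpr (hSa i hi)
      _ ≤ ∑ i ∈ a.support, a i := by
          rw [Finset.card_eq_sum_ones]
          exact Finset.sum_le_sum fun i hi =>
            Nat.one_le_iff_ne_zero.mpr (Finsupp.mem_support_iff.mp hi)
      _ = d := hdeg
end

section
/- For the path graph P_6 on six vertices, the v-number of its closed neighborhood ideal is v(N_{P_6}) = 2; in particular it is strictly smaller than the matching number a(P_6) = 3. -/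
open Finset MvPolynomial

noncomputable section
open scoped Classical

/-- The domination number: the minimum cardinality of a dominating set. -/
def dominationNumber {V : Type*} [Fintype V] (G : SimpleGraph V) : ℕ :=
  sInf {n : ℕ | ∃ D : Finset V, IsDominatingSet G D ∧ D.card = n}

/-- A vertex cover: every edge is incident with a vertex of the set. -/
def IsVertexCover {V : Type*} (G : SimpleGraph V) (C : Finset V) : Prop :=
  ∀ u v : V, G.Adj u v → u ∈ C ∨ v ∈ C

/-- The vertex cover number: the minimum cardinality of a vertex cover. -/
def coverNumber {V : Type*} [Fintype V] (G : SimpleGraph V) : ℕ :=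
  sInf {n : ℕ | ∃ C : Finset V, IsVertexCover G C ∧ C.card = n}

/-- A matching: a set of edges of the graph, no two of which share a vertex. -/
def IsMatchingSet {V : Type*} (G : SimpleGraph V) (M : Finset (Sym2 V)) : Prop :=
  (↑M ⊆ G.edgeSet) ∧ (M : Set (Sym2 V)).Pairwise fun e f => ∀ v : V, ¬(v ∈ e ∧ v ∈ f)

/-- The matching number: the maximum cardinality of a matching. -/
def matchingNumber {V : Type*} [Fintype V] (G : SimpleGraph V) : ℕ :=
  sSup {n : ℕ | ∃ M : Finset (Sym2 V), IsMatchingSet G M ∧ M.card = n}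

end

/-! ### Auxiliary material for the proof -/

noncomputable section VNumAux
open scoped Classical
variable {K : Type*} [Field K]

abbrev P6 : SimpleGraph (Fin 6) := SimpleGraph.pathGraph 6

lemma mem_closedNbhd' {u v : Fin 6} : u ∈ closedNbhd P6 v ↔ u = v ∨ P6.Adj v u := by
  simp [closedNbhd]

/-- The substitution which kills the variables in `T`. -/
def substT (K : Type*) [Field K] (T : Finset (Fin 6)) :
    MvPolynomial (Fin 6) K →+* MvPolynomial (Fin 6) K :=
  (aeval fun i => if i ∈ T then 0 else X i).toRingHom

@[simp] lemma substT_X (T : Finset (Fin 6)) (i : Fin 6) :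
    substT K T (X i) = if i ∈ T then 0 else X i := by simp [substT]

@[simp] lemma substT_C (T : Finset (Fin 6)) (a : K) :
    substT K T (MvPolynomial.C a) = MvPolynomial.C a := by
  simp [substT]

lemma substT_eq_zero_iff (T : Finset (Fin 6)) (g : MvPolynomial (Fin 6) K) :
    substT K T g = 0 ↔ g ∈ vertexIdeal K T := by
  constructor
  · intro h
    have key : ∀ p : MvPolynomial (Fin 6) K, p - substT K T p ∈ vertexIdeal K T := by
      intro p
      induction p using MvPolynomial.induction_on with
      | C a => simp
      | add p q hp hq =>
        have := Ideal.add_mem _ hp hq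
        simpa [map_add, add_sub_add_comm] using this
      | mul_X p i hp =>
        rw [map_mul, substT_X]
        by_cases hi : i ∈ T
        · simp only [hi, if_true, mul_zero, sub_zero]
          exact Ideal.mul_mem_left _ p (Ideal.subset_span ⟨i, by simpa using hi, rfl⟩)
        · simp only [hi, if_false]
          have h2 : p * X i - substT K T p * X i = (p - substT K T p) * X i := by ring
          rw [h2]
          exact Ideal.mul_mem_right _ _ hp
    have := key g
    rwa [h, sub_zero] at this
  · intro h
    refine Submodule.span_induction ?_ ?_ ?_ ?_ h
    · rintro x ⟨v, hv, rfl⟩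
      simp [show v ∈ T by simpa using hv]
    · simp
    · intro x y _ _ hx hy; rw [map_add, hx, hy, add_zero]
    · intro a x _ hx
      rw [smul_eq_mul, map_mul, hx, mul_zero]

lemma vertexIdeal_eq_ker (T : Finset (Fin 6)) :
    vertexIdeal K T = RingHom.ker (substT K T) := by
  ext g
  rw [RingHom.mem_ker, substT_eq_zero_iff]

lemma vertexIdeal_prime (T : Finset (Fin 6)) : (vertexIdeal K T).IsPrime := by
  rw [vertexIdeal_eq_ker]
  exact RingHom.ker_isPrime _

lemma X_not_mem_vertexIdeal {T : Finset (Fin 6)} {a : Fin 6} (ha : a ∉ T) :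
    (X a : MvPolynomial (Fin 6) K) ∉ vertexIdeal K T := by
  rw [← substT_eq_zero_iff, substT_X, if_neg ha]
  exact X_ne_zero a

lemma cnIdeal_le_vertexIdeal (T : Finset (Fin 6))
    (h : ∀ v : Fin 6, ∃ u ∈ T, u ∈ closedNbhd P6 v) :
    cnIdeal K P6 ≤ vertexIdeal K T := by
  rw [cnIdeal, Ideal.span_le]
  rintro x ⟨v, rfl⟩
  rw [SetLike.mem_coe, ← substT_eq_zero_iff, map_prod]
  obtain ⟨u, huT, hu⟩ := h v
  exact Finset.prod_eq_zero hu (by simp [huT])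

lemma transOf6 (T : Finset (Fin 6))
    (h : ∀ v : Fin 6, ∃ u ∈ T, u = v ∨ (v.val + 1 = u.val ∨ u.val + 1 = v.val)) :
    ∀ v : Fin 6, ∃ u ∈ T, u ∈ closedNbhd P6 v := by
  intro v
  obtain ⟨u, huT, hu⟩ := h v
  exact ⟨u, huT, mem_closedNbhd'.2 (by simpa [SimpleGraph.pathGraph_adj] using hu)⟩

lemma nbhd0 : closedNbhd P6 (0 : Fin 6) = {0, 1} := by
  ext u
  rw [mem_closedNbhd', SimpleGraph.pathGraph_adj]
  fin_cases u <;> simp [Fin.ext_iff] <;> decide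

lemma nbhd5 : closedNbhd P6 (5 : Fin 6) = {4, 5} := by
  ext u
  rw [mem_closedNbhd', SimpleGraph.pathGraph_adj]
  fin_cases u <;> simp [Fin.ext_iff] <;> decide

lemma gen01 : (X 0 * X 1 : MvPolynomial (Fin 6) K) ∈ cnIdeal K P6 := by
  apply Ideal.subset_span
  exact ⟨0, by simp only []; rw [nbhd0, Finset.prod_pair (by decide : (0:Fin 6) ≠ 1)]⟩

lemma gen45 : (X 4 * X 5 : MvPolynomial (Fin 6) K) ∈ cnIdeal K P6 := by
  apply Ideal.subset_span
  exact ⟨5, by simp only []; rw [nbhd5, Finset.prod_pair (by decide : (4:Fin 6) ≠ 5)]⟩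

/-! Homogeneous polynomials of degree 0 and 1. -/

lemma single_of_degree_one {d : Fin 6 →₀ ℕ} (hd : d.degree = 1) :
    ∃ v, d = Finsupp.single v 1 := by
  have hne : d.support.Nonempty := by
    rcases Finset.eq_empty_or_nonempty d.support with h | h
    · exfalso; rw [Finsupp.degree_apply, h] at hd; simp at hd
    · exact h
  obtain ⟨v, hv⟩ := hne
  refine ⟨v, Finsupp.eq_single_iff.2 ⟨?_, ?_⟩⟩
  · intro u hu
    by_contra hne
    simp only [Finset.mem_singleton] at hne
    have h1 : 1 ≤ d u := Nat.one_le_iff_ne_zero.2 (Finsupp.mem_support_iff.1 hu)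
    have h2 : 1 ≤ d v := Nat.one_le_iff_ne_zero.2 (Finsupp.mem_support_iff.1 hv)
    have : d u + d v ≤ d.degree := by
      rw [Finsupp.degree_apply]
      have := Finset.add_sum_erase _ d hu
      have h3 : d v ≤ ∑ i ∈ d.support.erase u, d i :=
        Finset.single_le_sum (fun i _ => Nat.zero_le _)
          (Finset.mem_erase.2 ⟨fun h => hne h.symm, hv⟩)
      omega
    omega
  · have h2 : 1 ≤ d v := Nat.one_le_iff_ne_zero.2 (Finsupp.mem_support_iff.1 hv)
    have h3 : d v ≤ d.degree := by
      rw [Finsupp.degree_apply]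
      exact Finset.single_le_sum (fun i _ => Nat.zero_le _) hv
    omega

lemma homog_one_rep (f : MvPolynomial (Fin 6) K) (hf : f.IsHomogeneous 1) :
    f = ∑ v : Fin 6, MvPolynomial.C (coeff (Finsupp.single v 1) f) * X v := by
  ext d
  rw [coeff_sum]
  simp only [coeff_C_mul, coeff_X']
  by_cases hd : ∃ v, d = Finsupp.single v 1
  · obtain ⟨v, rfl⟩ := hd
    rw [Finset.sum_eq_single v]
    · simp
    · intro w _ hw
      have : ¬(Finsupp.single w 1 = Finsupp.single v 1) := by
        intro h
        exact hw (Finsupp.single_left_injective (M := ℕ) one_ne_zero h)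
      simp [this]
    · simp
  · have hcoeff : coeff d f = 0 := by
      apply hf.coeff_eq_zero
      intro h
      exact hd (single_of_degree_one h)
    rw [hcoeff]
    symm
    apply Finset.sum_eq_zero
    intro w _
    have : ¬(Finsupp.single w 1 = d) := fun h => hd ⟨w, h.symm⟩
    simp [this]

lemma homog_zero_rep (f : MvPolynomial (Fin 6) K) (hf : f.IsHomogeneous 0) :
    f = MvPolynomial.C (coeff 0 f) := by
  ext d
  by_cases hd : d = 0
  · subst hd; simp
  · rw [coeff_C, if_neg (fun h => hd h.symm)]
    apply hf.coeff_eq_zero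
    rw [Ne, Finsupp.degree_eq_zero_iff]
    exact hd

/-- If a linear form lies in a vertex ideal, its coefficients outside the vertex set vanish. -/
lemma coeff_eq_zero_of_mem_vertexIdeal {f : MvPolynomial (Fin 6) K}
    (hf : f.IsHomogeneous 1) {T : Finset (Fin 6)} (hmem : f ∈ vertexIdeal K T)
    {v : Fin 6} (hv : v ∉ T) : coeff (Finsupp.single v 1) f = 0 := by
  have h0 : substT K T f = 0 := (substT_eq_zero_iff T f).2 hmem
  rw [homog_one_rep f hf] at h0
  rw [map_sum] at h0
  have h1 := congrArg (coeff (Finsupp.single v 1)) h0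
  rw [coeff_sum] at h1
  rw [Finset.sum_eq_single v] at h1
  · simpa [hv] using h1
  · intro w _ hw
    rw [map_mul, substT_C, substT_X]
    by_cases hwT : w ∈ T
    · simp [hwT]
    · rw [if_neg hwT, coeff_C_mul, coeff_X']
      have : ¬(Finsupp.single w 1 = Finsupp.single v 1) := by
        intro h
        exact hw (Finsupp.single_left_injective (M := ℕ) one_ne_zero h)
      simp [this]
  · simp

/-- The colon ideal of the cn-ideal of `P6` by `X 0 * X 5`. -/
lemma colon_X0X5 :
    Submodule.colon (cnIdeal K P6) (Ideal.span {(X 0 * X 5 : MvPolynomial (Fin 6) K)}) =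
      vertexIdeal K ({1, 4} : Finset (Fin 6)) := by
  have htrans : cnIdeal K P6 ≤ vertexIdeal K ({1, 4} : Finset (Fin 6)) :=
    cnIdeal_le_vertexIdeal _ (transOf6 _ (by decide))
  apply le_antisymm
  · intro g hg
    have hmul : g * (X 0 * X 5) ∈ cnIdeal K P6 := Ideal.mem_colon_span_singleton.1 hg
    have h0 : substT K ({1, 4} : Finset (Fin 6)) (g * (X 0 * X 5)) = 0 :=
      (substT_eq_zero_iff _ _).2 (htrans hmul)
    rw [map_mul, map_mul, substT_X, substT_X,
      if_neg (by decide : ¬(0:Fin 6) ∈ ({1,4}:Finset (Fin 6))),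
      if_neg (by decide : ¬(5:Fin 6) ∈ ({1,4}:Finset (Fin 6)))] at h0
    rcases mul_eq_zero.1 h0 with h1 | h1
    · exact (substT_eq_zero_iff _ _).1 h1
    · exact absurd h1 (mul_ne_zero (X_ne_zero 0) (X_ne_zero 5))
  · rw [vertexIdeal, Ideal.span_le]
    rintro x ⟨w, hw, rfl⟩
    simp only [Finset.coe_insert, Finset.coe_singleton, Set.mem_insert_iff,
      Set.mem_singleton_iff] at hw
    rcases hw with rfl | rfl
    · rw [SetLike.mem_coe, Ideal.mem_colon_span_singleton]
      have := Ideal.mul_mem_left (cnIdeal K P6) (X 5) gen01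
      rwa [show (X 5 : MvPolynomial (Fin 6) K) * (X 0 * X 1) = X 1 * (X 0 * X 5) by ring] at this
    · rw [SetLike.mem_coe, Ideal.mem_colon_span_singleton]
      have := Ideal.mul_mem_left (cnIdeal K P6) (X 0) gen45
      rwa [show (X 0 : MvPolynomial (Fin 6) K) * (X 4 * X 5) = X 4 * (X 0 * X 5) by ring] at this

lemma colon_eq_annihilator (I : Ideal (MvPolynomial (Fin 6) K)) (f : MvPolynomial (Fin 6) K) :
    Submodule.colon I (Ideal.span {f}) =
      (Submodule.span (MvPolynomial (Fin 6) K)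
        {(Ideal.Quotient.mk I f : MvPolynomial (Fin 6) K ⧸ I)}).annihilator := by
  ext g
  rw [Submodule.mem_annihilator_span_singleton, Ideal.mem_colon_span_singleton,
    ← Ideal.Quotient.mk_eq_mk, ← Submodule.Quotient.mk_smul, smul_eq_mul,
    Submodule.Quotient.mk_eq_zero]

end VNumAux

/-! ### Matching number of `P6` -/

section MatchingAux
open Finset

lemma matching_card_le (M : Finset (Sym2 (Fin 6)))
    (hM : IsMatchingSet (SimpleGraph.pathGraph 6) M) : M.card ≤ 3 := by
  classical
  set F : Sym2 (Fin 6) → Finset (Fin 6) := fun e => Finset.univ.filter (· ∈ e) with hF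
  have hcard : ∀ e ∈ M, (F e).card = 2 := by
    intro e he
    induction e using Sym2.ind with
    | _ a b =>
      have hadj : (SimpleGraph.pathGraph 6).Adj a b := hM.1 he
      have hab : a ≠ b := hadj.ne
      have : F s(a, b) = {a, b} := by
        ext v; simp [hF, Sym2.mem_iff]
      rw [this, Finset.card_pair hab]
  have hdisj : (M : Set (Sym2 (Fin 6))).PairwiseDisjoint F := by
    intro e he f hf hef
    simp only [Function.onFun]
    rw [Finset.disjoint_left]
    intro v hv hv'
    simp only [hF, Finset.mem_filter] at hv hv'
    exact hM.2 he hf hef v ⟨hv.2, hv'.2⟩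
  have hbu : (M.biUnion F).card = ∑ e ∈ M, (F e).card := Finset.card_biUnion hdisj
  have h6 : (M.biUnion F).card ≤ 6 := by
    have := Finset.card_le_univ (M.biUnion F)
    simpa using this
  rw [hbu, Finset.sum_congr rfl hcard, Finset.sum_const, smul_eq_mul] at h6
  omega

lemma matching3 :
    IsMatchingSet (SimpleGraph.pathGraph 6) ({s(0,1), s(2,3), s(4,5)} : Finset (Sym2 (Fin 6))) ∧
    ({s(0,1), s(2,3), s(4,5)} : Finset (Sym2 (Fin 6))).card = 3 := by
  refine ⟨⟨?_, ?_⟩, by decide⟩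
  · intro e he
    simp only [Finset.coe_insert, Finset.coe_singleton, Set.mem_insert_iff,
      Set.mem_singleton_iff] at he
    rcases he with rfl | rfl | rfl <;>
      · rw [SimpleGraph.mem_edgeSet, SimpleGraph.pathGraph_adj]; decide
  · intro e he f hf hef v hv
    simp only [Finset.coe_insert, Finset.coe_singleton, Set.mem_insert_iff,
      Set.mem_singleton_iff] at he hf
    rcases he with rfl | rfl | rfl <;> rcases hf with rfl | rfl | rfl <;>
      first
        | exact hef rfl
        | (obtain ⟨h1, h2⟩ := hv; revert h1 h2; revert v; simp [Sym2.mem_iff])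

lemma matchingNumber_P6 : matchingNumber (SimpleGraph.pathGraph 6) = 3 := by
  have hub : ∀ n ∈ {n : ℕ | ∃ M : Finset (Sym2 (Fin 6)),
      IsMatchingSet (SimpleGraph.pathGraph 6) M ∧ M.card = n}, n ≤ 3 := by
    rintro n ⟨M, hM, rfl⟩
    exact matching_card_le M hM
  have hmem : 3 ∈ {n : ℕ | ∃ M : Finset (Sym2 (Fin 6)),
      IsMatchingSet (SimpleGraph.pathGraph 6) M ∧ M.card = n} :=
    ⟨_, matching3.1, matching3.2⟩
  exact le_antisymm (csSup_le ⟨3, hmem⟩ hub) (le_csSup ⟨3, hub⟩ hmem)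

end MatchingAux

set_option maxHeartbeats 2000000 in
/-- For the path P_6 on six vertices, the v-number of its closed neighborhood ideal
is 2, the matching number is 3, and in particular the v-number is strictly smaller
than the matching number. -/
theorem vNumber_pathGraph_six (K : Type*) [Field K] :
    vNumber (cnIdeal K (SimpleGraph.pathGraph 6)) = 2 ∧
      matchingNumber (SimpleGraph.pathGraph 6) = 3 ∧
      vNumber (cnIdeal K (SimpleGraph.pathGraph 6)) <
        matchingNumber (SimpleGraph.pathGraph 6) := by
  classical
  have hIle : ∀ T : Finset (Fin 6),
      (∀ v : Fin 6, ∃ u ∈ T, u = v ∨ (v.val + 1 = u.val ∨ u.val + 1 = v.val)) →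
      cnIdeal K (SimpleGraph.pathGraph 6) ≤ vertexIdeal K T := fun T hT =>
    cnIdeal_le_vertexIdeal T (transOf6 T hT)
  set S2 : Set ℕ := {d : ℕ | ∃ f : MvPolynomial (Fin 6) K, f.IsHomogeneous d ∧
    Submodule.colon (cnIdeal K (SimpleGraph.pathGraph 6)) (Ideal.span {f}) ∈
      associatedPrimes (MvPolynomial (Fin 6) K)
        (MvPolynomial (Fin 6) K ⧸ cnIdeal K (SimpleGraph.pathGraph 6))} with hS2
  have hvn : vNumber (cnIdeal K (SimpleGraph.pathGraph 6)) = sInf S2 := rfl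
  -- membership of 2
  have hcolon : Submodule.colon (cnIdeal K (SimpleGraph.pathGraph 6))
      (Ideal.span {(X 0 * X 5 : MvPolynomial (Fin 6) K)}) =
      vertexIdeal K ({1, 4} : Finset (Fin 6)) := colon_X0X5
  have h2mem : 2 ∈ S2 := by
    refine ⟨X 0 * X 5, (isHomogeneous_X K 0).mul (isHomogeneous_X K 5), ?_, ?_⟩
    · rw [hcolon]; exact vertexIdeal_prime _
    · refine ⟨Ideal.Quotient.mk _ (X 0 * X 5), ?_⟩
      have hb : (⊥ : Submodule (MvPolynomial (Fin 6) K)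
          (MvPolynomial (Fin 6) K ⧸ cnIdeal K (SimpleGraph.pathGraph 6))).colon
            {Ideal.Quotient.mk _ (X 0 * X 5)} =
          Submodule.colon (cnIdeal K (SimpleGraph.pathGraph 6))
            (Ideal.span {(X 0 * X 5 : MvPolynomial (Fin 6) K)}) := by
        ext g
        rw [Submodule.mem_colon_singleton, Submodule.mem_bot, Ideal.mem_colon_span_singleton,
          ← Ideal.Quotient.mk_eq_mk, ← Submodule.Quotient.mk_smul, Submodule.Quotient.mk_eq_zero, smul_eq_mul]
      rw [hb, hcolon, (vertexIdeal_prime _).radical]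
  -- 0 is not in the set
  have h0mem : 0 ∉ S2 := by
    rintro ⟨f, hf, hass⟩
    have hprime := hass.1
    obtain ⟨a, rfl⟩ : ∃ a, f = MvPolynomial.C a := ⟨coeff 0 f, homog_zero_rep f hf⟩
    by_cases ha : a = 0
    · have h1 : (1 : MvPolynomial (Fin 6) K) ∈
          Submodule.colon (cnIdeal K (SimpleGraph.pathGraph 6))
            (Ideal.span {(MvPolynomial.C a : MvPolynomial (Fin 6) K)}) := by
        rw [Ideal.mem_colon_span_singleton, one_mul, ha, map_zero]
        exact Ideal.zero_mem _
      exact hprime.ne_top ((Ideal.eq_top_iff_one _).2 h1)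
    · have hcoloneq : Submodule.colon (cnIdeal K (SimpleGraph.pathGraph 6))
          (Ideal.span {(MvPolynomial.C a : MvPolynomial (Fin 6) K)}) =
          cnIdeal K (SimpleGraph.pathGraph 6) := by
        ext g
        rw [Ideal.mem_colon_span_singleton]
        constructor
        · intro h
          have h2 := Ideal.mul_mem_right (MvPolynomial.C a⁻¹) _ h
          rwa [mul_assoc, ← map_mul, mul_inv_cancel₀ ha, map_one, mul_one] at h2
        · intro h
          exact Ideal.mul_mem_right _ _ h
      rw [hcoloneq] at hprime
      rcases hprime.mem_or_mem (gen01 (K := K)) with h | h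
      · exact X_not_mem_vertexIdeal (by decide)
          (hIle ({1, 4} : Finset (Fin 6)) (by decide) h)
      · exact X_not_mem_vertexIdeal (by decide)
          (hIle ({0, 2, 4} : Finset (Fin 6)) (by decide) h)
  -- 1 is not in the set
  have h1mem : 1 ∉ S2 := by
    rintro ⟨f, hf, hass⟩
    have hprime := hass.1
    have hIcolon : cnIdeal K (SimpleGraph.pathGraph 6) ≤
        Submodule.colon (cnIdeal K (SimpleGraph.pathGraph 6)) (Ideal.span {f}) := by
      intro g hg
      exact Ideal.mem_colon_span_singleton.2 (Ideal.mul_mem_right f _ hg)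
    have h01 := hprime.mem_or_mem (hIcolon (gen01 (K := K)))
    have h45 := hprime.mem_or_mem (hIcolon (gen45 (K := K)))
    have kill : ∀ (a : Fin 6) (T : Finset (Fin 6)),
        (∀ v : Fin 6, ∃ u ∈ T, u = v ∨ (v.val + 1 = u.val ∨ u.val + 1 = v.val)) → a ∉ T →
        X a ∈ Submodule.colon (cnIdeal K (SimpleGraph.pathGraph 6)) (Ideal.span {f}) →
        ∀ v ∉ T, coeff (Finsupp.single v 1) f = 0 := by
      intro a T hT haT hXa v hv
      have hXaf : X a * f ∈ cnIdeal K (SimpleGraph.pathGraph 6) :=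
        Ideal.mem_colon_span_singleton.1 hXa
      rcases (vertexIdeal_prime T).mem_or_mem (hIle T hT hXaf) with h | h
      · exact absurd h (X_not_mem_vertexIdeal haT)
      · exact coeff_eq_zero_of_mem_vertexIdeal hf h hv
    have hall : ∀ v : Fin 6, coeff (Finsupp.single v 1) f = 0 := by
      rcases h01 with ha | ha <;> rcases h45 with hb | hb
      · have k14 := kill 0 ({1,4} : Finset (Fin 6)) (by decide) (by decide) ha
        have k125 := kill 0 ({1,2,5} : Finset (Fin 6)) (by decide) (by decide) ha
        have k025 := kill 4 ({0,2,5} : Finset (Fin 6)) (by decide) (by decide) hb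
        intro v; fin_cases v
        exacts [k14 0 (by decide), k025 1 (by decide), k14 2 (by decide),
          k14 3 (by decide), k125 4 (by decide), k14 5 (by decide)]
      · have k14 := kill 0 ({1,4} : Finset (Fin 6)) (by decide) (by decide) ha
        have k125 := kill 0 ({1,2,5} : Finset (Fin 6)) (by decide) (by decide) ha
        have k024 := kill 5 ({0,2,4} : Finset (Fin 6)) (by decide) (by decide) hb
        intro v; fin_cases v
        exacts [k14 0 (by decide), k024 1 (by decide), k14 2 (by decide),
          k14 3 (by decide), k125 4 (by decide), k14 5 (by decide)]
      · have k024 := kill 1 ({0,2,4} : Finset (Fin 6)) (by decide) (by decide) ha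
        have k035 := kill 1 ({0,3,5} : Finset (Fin 6)) (by decide) (by decide) ha
        have k135 := kill 4 ({1,3,5} : Finset (Fin 6)) (by decide) (by decide) hb
        intro v; fin_cases v
        exacts [k135 0 (by decide), k024 1 (by decide), k035 2 (by decide),
          k024 3 (by decide), k035 4 (by decide), k024 5 (by decide)]
      · have k024 := kill 1 ({0,2,4} : Finset (Fin 6)) (by decide) (by decide) ha
        have k035 := kill 1 ({0,3,5} : Finset (Fin 6)) (by decide) (by decide) ha
        have k14 := kill 5 ({1,4} : Finset (Fin 6)) (by decide) (by decide) hb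
        intro v; fin_cases v
        exacts [k14 0 (by decide), k024 1 (by decide), k035 2 (by decide),
          k024 3 (by decide), k035 4 (by decide), k024 5 (by decide)]
    have hf0 : f = 0 := by
      rw [homog_one_rep f hf]
      simp [hall]
    have h1 : (1 : MvPolynomial (Fin 6) K) ∈
        Submodule.colon (cnIdeal K (SimpleGraph.pathGraph 6)) (Ideal.span {f}) := by
      rw [Ideal.mem_colon_span_singleton, one_mul, hf0]
      exact Ideal.zero_mem _
    exact hprime.ne_top ((Ideal.eq_top_iff_one _).2 h1)
  have hval : vNumber (cnIdeal K (SimpleGraph.pathGraph 6)) = 2 := by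
    rw [hvn]
    have hle := Nat.sInf_le h2mem
    have hmem := Nat.sInf_mem (⟨2, h2mem⟩ : S2.Nonempty)
    have hne0 : sInf S2 ≠ 0 := fun h => h0mem (h ▸ hmem)
    have hne1 : sInf S2 ≠ 1 := fun h => h1mem (h ▸ hmem)
    omega
  refine ⟨hval, matchingNumber_P6, ?_⟩
  rw [hval, matchingNumber_P6]
  omega
end
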